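/- arXiv:2605.12648 — 2 statements merged into one kernel-verified Lean document; each statement's English description precedes it below -/
import Mathlib

section
/- Let ℓ be the logistic loss and suppose f: R^d → R is a differentiable function of parameter W with ‖∇_W f(x)‖₂ ≤ b for all inputs x in a set X and all W. Define the empirical risk L_S(W) = (1/n)∑_{i=1}^n ℓ(y_i f_W(x_i)) with y_i ∈ {−1,+1} and x_i ∈ X. If additionally (1/4)‖∇ f_W(x)‖₂² + ‖∇² f_W(x)‖₂ ≤ β for all x ∈ X and all W, then ‖∇ L_S(W)‖₂² ≤ 4β·L_S(W) for all W. -/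
set_option maxHeartbeats 1000000

/-- The logistic loss `ℓ(z) = log(1 + exp(-z))`. -/
noncomputable def logisticLoss (z : ℝ) : ℝ := Real.log (1 + Real.exp (-z))

lemma logisticLoss_nonneg (z : ℝ) : 0 ≤ logisticLoss z := by
  unfold logisticLoss
  have : (1:ℝ) ≤ 1 + Real.exp (-z) := le_add_of_nonneg_right (Real.exp_pos _).le
  exact Real.log_nonneg this

lemma hasDerivAt_logisticLoss (z : ℝ) :
    HasDerivAt logisticLoss (-(Real.exp (-z)) / (1 + Real.exp (-z))) z := by
  have h1 : HasDerivAt (fun z : ℝ => 1 + Real.exp (-z)) (-(Real.exp (-z))) z := by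
    have := (Real.hasDerivAt_exp (-z)).comp z (hasDerivAt_neg z)
    simpa using this.const_add 1
  have hne : (1 : ℝ) + Real.exp (-z) ≠ 0 := by positivity
  show HasDerivAt (fun z => Real.log (1 + Real.exp (-z))) _ z
  simpa using h1.log hne

lemma abs_deriv_logisticLoss_le_one (z : ℝ) :
    |(-(Real.exp (-z)) / (1 + Real.exp (-z)))| ≤ 1 := by
  have hpos : (0:ℝ) < 1 + Real.exp (-z) := by positivity
  rw [abs_div, abs_neg, abs_of_pos (Real.exp_pos _), abs_of_pos hpos,
    div_le_one hpos]
  linarith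

lemma abs_deriv_logisticLoss_le_loss (z : ℝ) :
    |(-(Real.exp (-z)) / (1 + Real.exp (-z)))| ≤ logisticLoss z := by
  have hpos : (0:ℝ) < 1 + Real.exp (-z) := by positivity
  rw [abs_div, abs_neg, abs_of_pos (Real.exp_pos _), abs_of_pos hpos]
  -- t/(1+t) ≤ log(1+t) via log x ≤ x - 1 with x = 1/(1+t)
  have hx : (0:ℝ) < (1 + Real.exp (-z))⁻¹ := by positivity
  have h := Real.log_le_sub_one_of_pos hx
  rw [Real.log_inv] at h
  unfold logisticLoss
  have : Real.exp (-z) / (1 + Real.exp (-z)) = 1 - (1 + Real.exp (-z))⁻¹ := by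
    field_simp
    ring
  rw [this]
  linarith

/-- Self-bounding property of the empirical logistic risk: if
`(1/4)‖∇f_W(x)‖² + ‖∇²f_W(x)‖ ≤ β` uniformly over inputs `x ∈ X` and parameters `W`,
then `‖∇L_S(W)‖² ≤ 4β L_S(W)` for the empirical risk
`L_S(W) = (1/n) ∑ ℓ(y_i f_W(x_i))`. -/
theorem empirical_risk_self_bounding {p : ℕ} {ι : Type*} (X : Set ι)
    (f : EuclideanSpace ℝ (Fin p) → ι → ℝ)
    (hf : ∀ x ∈ X, ContDiff ℝ 2 (fun W => f W x))
    (n : ℕ) (hn : 0 < n) (xs : Fin n → ι) (hxs : ∀ i, xs i ∈ X)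
    (y : Fin n → ℝ) (hy : ∀ i, y i = 1 ∨ y i = -1)
    (b β : ℝ)
    (hgrad : ∀ x ∈ X, ∀ W, ‖gradient (fun W' => f W' x) W‖ ≤ b)
    (hβ : ∀ x ∈ X, ∀ W,
      (1 / 4) * ‖gradient (fun W' => f W' x) W‖ ^ 2
        + ‖iteratedFDeriv ℝ 2 (fun W' => f W' x) W‖ ≤ β)
    (LS : EuclideanSpace ℝ (Fin p) → ℝ)
    (hLS : LS = fun W => (n : ℝ)⁻¹ * ∑ i, logisticLoss (y i * f W (xs i))) :
    ∀ W, ‖gradient LS W‖ ^ 2 ≤ 4 * β * LS W := by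
  intro W
  set Df : Fin n → EuclideanSpace ℝ (Fin p) →L[ℝ] ℝ :=
    fun i => fderiv ℝ (fun W' => f W' (xs i)) W with hDf
  set u : Fin n → ℝ := fun i => y i * f W (xs i) with hu
  set d : Fin n → ℝ := fun i => -(Real.exp (-(u i))) / (1 + Real.exp (-(u i))) with hd
  have hF : ∀ i, HasFDerivAt (fun W' => f W' (xs i)) (Df i) W := fun i =>
    (((hf _ (hxs i)).differentiable (by norm_num)) W).hasFDerivAt
  have hgi : ∀ i, HasFDerivAt (fun W' => logisticLoss (y i * f W' (xs i)))
      ((d i) • ((y i) • Df i)) W := fun i =>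
    (hasDerivAt_logisticLoss (u i)).comp_hasFDerivAt (h₂ := logisticLoss) W ((hF i).const_mul (y i))
  have hLSder : HasFDerivAt LS ((n:ℝ)⁻¹ • ∑ i, (d i) • ((y i) • Df i)) W := by
    rw [hLS]
    exact (HasFDerivAt.fun_sum (fun i _ => hgi i)).const_mul _
  -- gradient norm equals fderiv norm
  have hgn : ∀ (g : EuclideanSpace ℝ (Fin p) → ℝ) (W'), ‖gradient g W'‖ = ‖fderiv ℝ g W'‖ := by
    intro g W'
    simp only [gradient, LinearIsometryEquiv.norm_map]
  have hβ0 : 0 ≤ β := by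
    have := hβ (xs ⟨0, hn⟩) (hxs ⟨0, hn⟩) W
    nlinarith [norm_nonneg (gradient (fun W' => f W' (xs ⟨0, hn⟩)) W),
      norm_nonneg (iteratedFDeriv ℝ 2 (fun W' => f W' (xs ⟨0, hn⟩)) W)]
  -- per-term facts
  have hDfsq : ∀ i, ‖Df i‖ ^ 2 ≤ 4 * β := by
    intro i
    have h1 := hβ (xs i) (hxs i) W
    have h2 : ‖gradient (fun W' => f W' (xs i)) W‖ = ‖Df i‖ := hgn _ W
    rw [h2] at h1
    nlinarith [norm_nonneg (iteratedFDeriv ℝ 2 (fun W' => f W' (xs i)) W)]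
  have hyi : ∀ i, |y i| = 1 := by
    intro i; rcases hy i with h | h <;> simp [h]
  set a : Fin n → ℝ := fun i => |d i| * ‖Df i‖ with ha
  have ha0 : ∀ i, 0 ≤ a i := fun i => mul_nonneg (abs_nonneg _) (norm_nonneg _)
  have hasq : ∀ i, a i ^ 2 ≤ 4 * β * logisticLoss (u i) := by
    intro i
    have h1 : |d i| ≤ 1 := abs_deriv_logisticLoss_le_one (u i)
    have h2 : |d i| ≤ logisticLoss (u i) := abs_deriv_logisticLoss_le_loss (u i)
    have h3 : ‖Df i‖ ^ 2 ≤ 4 * β := hDfsq i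
    have hd0 : 0 ≤ |d i| := abs_nonneg _
    have hn0 : 0 ≤ ‖Df i‖ := norm_nonneg _
    calc a i ^ 2 = (|d i| ^ 2) * (‖Df i‖ ^ 2) := by ring
      _ ≤ (|d i| * 1) * (4 * β) := by
          apply mul_le_mul _ h3 (by positivity) (by positivity)
          nlinarith
      _ ≤ logisticLoss (u i) * (4 * β) := by
          rw [mul_one]
          exact mul_le_mul_of_nonneg_right h2 (by linarith)
      _ = 4 * β * logisticLoss (u i) := by ring
  -- norm of the gradient of LS
  have hnorm : ‖gradient LS W‖ ≤ (n:ℝ)⁻¹ * ∑ i, a i := by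
    rw [hgn, hLSder.fderiv, norm_smul ((n:ℝ)⁻¹) (∑ i, (d i) • ((y i) • Df i))]
    have : ‖∑ i, (d i) • ((y i) • Df i)‖ ≤ ∑ i, a i := by
      refine (norm_sum_le _ _).trans (Finset.sum_le_sum fun i _ => ?_)
      have e1 : ‖d i • y i • Df i‖ = |d i| * (|y i| * ‖Df i‖) := by
        rw [norm_smul (d i) ((y i) • Df i), norm_smul (y i) (Df i), Real.norm_eq_abs, Real.norm_eq_abs]
      rw [e1, hyi i, one_mul]
    calc ‖(n:ℝ)⁻¹‖ * ‖∑ i, (d i) • ((y i) • Df i)‖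
        ≤ ‖(n:ℝ)⁻¹‖ * ∑ i, a i := by
          exact mul_le_mul_of_nonneg_left this (norm_nonneg _)
      _ = (n:ℝ)⁻¹ * ∑ i, a i := by
          rw [Real.norm_eq_abs, abs_of_nonneg (by positivity)]
  have hsum0 : 0 ≤ ∑ i, a i := Finset.sum_nonneg fun i _ => ha0 i
  have hnpos : (0:ℝ) < n := Nat.cast_pos.mpr hn
  have hCS : (∑ i, a i) ^ 2 ≤ (n:ℝ) * ∑ i, a i ^ 2 := by
    have := sq_sum_le_card_mul_sum_sq (s := Finset.univ) (f := a)
    simpa using this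
  have hsumsq : ∑ i, a i ^ 2 ≤ ∑ i, 4 * β * logisticLoss (u i) :=
    Finset.sum_le_sum fun i _ => hasq i
  have hfinal : ‖gradient LS W‖ ^ 2 ≤ ((n:ℝ)⁻¹ * ∑ i, a i) ^ 2 := by
    apply sq_le_sq' _ hnorm
    have := norm_nonneg (gradient LS W)
    nlinarith [mul_nonneg (inv_nonneg.mpr hnpos.le) hsum0]
  calc ‖gradient LS W‖ ^ 2 ≤ ((n:ℝ)⁻¹ * ∑ i, a i) ^ 2 := hfinal
    _ = (n:ℝ)⁻¹ * (n:ℝ)⁻¹ * (∑ i, a i) ^ 2 := by ring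
    _ ≤ (n:ℝ)⁻¹ * (n:ℝ)⁻¹ * ((n:ℝ) * ∑ i, a i ^ 2) := by
        apply mul_le_mul_of_nonneg_left hCS (by positivity)
    _ = (n:ℝ)⁻¹ * ((n:ℝ)⁻¹ * (n:ℝ)) * ∑ i, a i ^ 2 := by ring
    _ = (n:ℝ)⁻¹ * ∑ i, a i ^ 2 := by rw [inv_mul_cancel₀ hnpos.ne', mul_one]
    _ ≤ (n:ℝ)⁻¹ * ∑ i, 4 * β * logisticLoss (u i) := by
        apply mul_le_mul_of_nonneg_left hsumsq (by positivity)
    _ = 4 * β * LS W := by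
        rw [hLS]; simp only [← Finset.mul_sum]; ring
end

section
/- Let {X_t}_{t=1}^T be adapted to a filtration {F_t} with X_t ∈ [0, L] almost surely, and let V = ∑_{t=1}^T E[X_t | F_{t−1}]. Suppose V ≤ v almost surely for a constant v. Then for any u > 0, P(∑_{t=1}^T X_t ≥ 2v + 2Lu) ≤ exp(−u). -/
open MeasureTheory

/-- Convexity step: for `x ∈ [0, L]`, `exp((log 2 / L) * x) ≤ 1 + x / L`. -/
lemma chernoff_aux_exp_le {L x : ℝ} (hL : 0 < L) (h0 : 0 ≤ x) (hx : x ≤ L) :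
    Real.exp (Real.log 2 / L * x) ≤ 1 + x / L := by
  set s : ℝ := x / L with hs
  have hs0 : 0 ≤ s := div_nonneg h0 hL.le
  have hs1 : s ≤ 1 := (div_le_one hL).2 hx
  have hconv := convexOn_exp.2 (Set.mem_univ (0 : ℝ)) (Set.mem_univ (Real.log 2))
    (by linarith : (0:ℝ) ≤ 1 - s) hs0 (by ring)
  simp only [smul_eq_mul, mul_zero, zero_add, Real.exp_zero, mul_one,
    Real.exp_log two_pos] at hconv
  have hrw : Real.log 2 / L * x = s * Real.log 2 := by
    field_simp [hs]
    rw [hs]; field_simp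
  rw [hrw]
  calc Real.exp (s * Real.log 2) ≤ (1 - s) * 1 + s * 2 := by simpa using hconv
    _ = 1 + s := by ring

/-- Chernoff-type tail bound for adapted, bounded, nonnegative random variables:
if `X_t ∈ [0, L]` a.s., `X_t` is adapted to the filtration `ℱ`, and the sum of the
predictable conditional means is a.s. at most `v`, then for any `u > 0`,
`P(∑_{t=1}^T X_t ≥ 2v + 2Lu) ≤ exp(-u)`. -/
theorem chernoff_adapted_bounded {Ω : Type*} {m0 : MeasurableSpace Ω}
    (μ : Measure Ω) [IsProbabilityMeasure μ]
    (ℱ : Filtration ℕ m0) (T : ℕ) (L v : ℝ) (hL : 0 < L)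
    (X : ℕ → Ω → ℝ)
    (hadapted : Adapted ℱ X)
    (hbound : ∀ t, ∀ᵐ ω ∂μ, X t ω ∈ Set.Icc 0 L)
    (hV : ∀ᵐ ω ∂μ, ∑ t ∈ Finset.Icc 1 T, (μ[X t | ℱ (t - 1)]) ω ≤ v)
    (u : ℝ) (hu : 0 < u) :
    μ {ω | 2 * v + 2 * L * u ≤ ∑ t ∈ Finset.Icc 1 T, X t ω}
      ≤ ENNReal.ofReal (Real.exp (-u)) := by
  set θ : ℝ := Real.log 2 / L with hθdef
  have hlog2 : (0.6931471803 : ℝ) < Real.log 2 := Real.log_two_gt_d9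
  have hθpos : 0 < θ := div_pos (by linarith) hL
  -- basic measurability and integrability of the `X t`
  have hXm : ∀ t, StronglyMeasurable (X t) := fun t => ((hadapted t).mono (ℱ.le t) le_rfl).stronglyMeasurable
  have hXint : ∀ t, Integrable (X t) μ := by
    intro t
    refine (integrable_const L).mono' (hXm t).aestronglyMeasurable ?_
    filter_upwards [hbound t] with ω hω
    rw [Real.norm_eq_abs, abs_of_nonneg hω.1]; exact hω.2
  -- the conditional means are also in `[0, L]` a.s.
  have hcm : ∀ t, StronglyMeasurable (μ[X t | ℱ (t - 1)]) :=
    fun t => stronglyMeasurable_condExp.mono (ℱ.le (t - 1))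
  have hcbound : ∀ t, ∀ᵐ ω ∂μ, (μ[X t | ℱ (t - 1)]) ω ∈ Set.Icc 0 L := by
    intro t
    have h1 : 0 ≤ᵐ[μ] μ[X t | ℱ (t - 1)] :=
      condExp_nonneg ((hbound t).mono fun ω hω => hω.1)
    have h2 : μ[X t | ℱ (t - 1)] ≤ᵐ[μ] μ[(fun _ => L) | ℱ (t - 1)] :=
      condExp_mono (hXint t) (integrable_const L) ((hbound t).mono fun ω hω => hω.2)
    have h3 : μ[(fun _ => L : Ω → ℝ) | ℱ (t - 1)] = fun _ => L :=
      condExp_const (ℱ.le (t - 1)) L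
    rw [h3] at h2
    filter_upwards [h1, h2] with ω hω1 hω2
    exact ⟨hω1, hω2⟩
  -- the key processes
  set S : ℕ → Ω → ℝ := fun n ω => ∑ t ∈ Finset.Icc 1 n, X t ω with hSdef
  set W : ℕ → Ω → ℝ := fun n ω => ∑ t ∈ Finset.Icc 1 n, (μ[X t | ℱ (t - 1)]) ω with hWdef
  set f : ℕ → Ω → ℝ := fun n ω => Real.exp (θ * S n ω - W n ω / L) with hfdef
  have hfpos : ∀ n ω, 0 < f n ω := fun n ω => Real.exp_pos _
  have hSm : ∀ n, StronglyMeasurable (S n) :=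
    fun n => Finset.stronglyMeasurable_fun_sum _ fun t _ => hXm t
  have hWm : ∀ n, StronglyMeasurable (W n) :=
    fun n => Finset.stronglyMeasurable_fun_sum _ fun t _ => hcm t
  have hfm : ∀ n, StronglyMeasurable (f n) := fun n =>
    ((((hSm n).measurable.const_mul θ).sub
      ((hWm n).measurable.div_const L)).exp).stronglyMeasurable
  -- a.e. bounds on S and W
  have hSb : ∀ n, ∀ᵐ ω ∂μ, 0 ≤ S n ω ∧ S n ω ≤ n * L := by
    intro n
    have := ae_all_iff.2 hbound
    filter_upwards [this] with ω hω
    constructor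
    · exact Finset.sum_nonneg fun t _ => (hω t).1
    · calc S n ω ≤ ∑ t ∈ Finset.Icc 1 n, L :=
            Finset.sum_le_sum fun t _ => (hω t).2
        _ = n * L := by
            rw [Finset.sum_const, nsmul_eq_mul, Nat.card_Icc]
            simp
  have hWb : ∀ n, ∀ᵐ ω ∂μ, 0 ≤ W n ω := by
    intro n
    filter_upwards [ae_all_iff.2 hcbound] with ω hω
    exact Finset.sum_nonneg fun t _ => (hω t).1
  -- integrability of f n
  have hfint : ∀ n, Integrable (f n) μ := by
    intro n
    refine (integrable_const (Real.exp (θ * (n * L)))).mono'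
      (hfm n).aestronglyMeasurable ?_
    filter_upwards [hSb n, hWb n] with ω hS hW
    rw [Real.norm_eq_abs, abs_of_pos (hfpos n ω)]
    apply Real.exp_le_exp.2
    have : 0 ≤ W n ω / L := div_nonneg hW hL.le
    nlinarith [hS.2, hθpos]
  -- key inductive bound: ∫ f n ≤ 1
  have key : ∀ n, ∫ ω, f n ω ∂μ ≤ 1 := by
    intro n
    induction n with
    | zero =>
      have : ∀ ω, f 0 ω = 1 := by
        intro ω
        simp [hfdef, hSdef, hWdef]
      rw [show (f 0) = fun _ => (1:ℝ) from funext this]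
      simp
    | succ n ih =>
      -- decompose
      have hsplitS : ∀ ω, S (n + 1) ω = S n ω + X (n + 1) ω := by
        intro ω; exact Finset.sum_Icc_succ_top (Nat.one_le_iff_ne_zero.2 (Nat.succ_ne_zero n)) _
      have hsplitW : ∀ ω, W (n + 1) ω = W n ω + (μ[X (n + 1) | ℱ n]) ω := by
        intro ω
        have := Finset.sum_Icc_succ_top (f := fun t => (μ[X t | ℱ (t - 1)]) ω)
          (Nat.one_le_iff_ne_zero.2 (Nat.succ_ne_zero n))
        simpa using this
      set g : Ω → ℝ := fun ω => f n ω * Real.exp (-((μ[X (n + 1) | ℱ n]) ω) / L) with hgdef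
      set h : Ω → ℝ := fun ω => Real.exp (θ * X (n + 1) ω) with hhdef
      have hfsplit : ∀ ω, f (n + 1) ω = g ω * h ω := by
        intro ω
        simp only [hfdef, hgdef, hhdef, hsplitS, hsplitW]
        rw [← Real.exp_add, ← Real.exp_add]
        congr 1
        have : (n : ℕ) + 1 - 1 = n := rfl
        ring_nf
      -- measurability of g w.r.t. ℱ n
      have hfnm : StronglyMeasurable[ℱ n] (f n) := by
        have hSm' : StronglyMeasurable[ℱ n] (S n) := by
          refine Finset.stronglyMeasurable_fun_sum _ fun t ht => ?_
          exact ((hadapted t).mono (ℱ.mono (Finset.mem_Icc.1 ht).2) le_rfl).stronglyMeasurable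
        have hWm' : StronglyMeasurable[ℱ n] (W n) := by
          refine Finset.stronglyMeasurable_fun_sum _ fun t ht => ?_
          exact stronglyMeasurable_condExp.mono
            (ℱ.mono ((Nat.sub_le t 1).trans (Finset.mem_Icc.1 ht).2))
        exact ((((hSm'.measurable.const_mul θ).sub
          (hWm'.measurable.div_const L)).exp).stronglyMeasurable :
            StronglyMeasurable[ℱ n] _)
      have hgm : StronglyMeasurable[ℱ n] g := by
        have : StronglyMeasurable[ℱ n] (μ[X (n + 1) | ℱ n]) := stronglyMeasurable_condExp
        exact hfnm.mul
          (((this.measurable.neg.div_const L).exp).stronglyMeasurable :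
            StronglyMeasurable[ℱ n] _)
      have hgm0 : StronglyMeasurable g := hgm.mono (ℱ.le n)
      -- bounds for g and h
      have hgnonneg : ∀ ω, 0 ≤ g ω := fun ω =>
        mul_nonneg (hfpos n ω).le (Real.exp_pos _).le
      have hgb : ∀ᵐ ω ∂μ, g ω ≤ Real.exp (θ * (n * L)) := by
        filter_upwards [hSb n, hWb n, hcbound (n + 1)] with ω h1 h2 h3
        have hc : (μ[X (n + 1) | ℱ ((n+1) - 1)]) ω = (μ[X (n + 1) | ℱ n]) ω := rfl
        have hcge : 0 ≤ (μ[X (n + 1) | ℱ n]) ω := by rw [← hc]; exact h3.1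
        have he : Real.exp (-((μ[X (n + 1) | ℱ n]) ω) / L) ≤ 1 := by
          apply Real.exp_le_one_iff.2
          have : 0 ≤ (μ[X (n + 1) | ℱ n]) ω / L := div_nonneg hcge hL.le
          linarith [neg_div ((L:ℝ)) ((μ[X (n + 1) | ℱ n]) ω)]
        have hfb : f n ω ≤ Real.exp (θ * (n * L)) := by
          apply Real.exp_le_exp.2
          have : 0 ≤ W n ω / L := div_nonneg h2 hL.le
          nlinarith [h1.2, hθpos]
        calc g ω ≤ f n ω * 1 := by
              apply mul_le_mul_of_nonneg_left he (hfpos n ω).le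
          _ = f n ω := mul_one _
          _ ≤ _ := hfb
      have hgint : Integrable g μ := by
        refine (integrable_const (Real.exp (θ * (n * L)))).mono'
          hgm0.aestronglyMeasurable ?_
        filter_upwards [hgb] with ω hω
        rw [Real.norm_eq_abs, abs_of_nonneg (hgnonneg ω)]; exact hω
      have hhm : StronglyMeasurable h :=
        (((hXm (n + 1)).measurable.const_mul θ).exp).stronglyMeasurable
      have hhb : ∀ᵐ ω ∂μ, h ω ≤ 2 := by
        filter_upwards [hbound (n + 1)] with ω hω
        have : θ * X (n + 1) ω ≤ Real.log 2 := by
          have : θ * X (n + 1) ω ≤ θ * L := by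
            apply mul_le_mul_of_nonneg_left hω.2 hθpos.le
          calc θ * X (n + 1) ω ≤ θ * L := this
            _ = Real.log 2 := by rw [hθdef]; field_simp
        calc h ω ≤ Real.exp (Real.log 2) := Real.exp_le_exp.2 this
          _ = 2 := Real.exp_log two_pos
      have hhint : Integrable h μ := by
        refine (integrable_const (2:ℝ)).mono' hhm.aestronglyMeasurable ?_
        filter_upwards [hhb] with ω hω
        rw [Real.norm_eq_abs, abs_of_pos (Real.exp_pos _)]; exact hω
      have hghint : Integrable (g * h) μ := by
        refine (integrable_const (Real.exp (θ * (n * L)) * 2)).mono'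
          (hgm0.mul hhm).aestronglyMeasurable ?_
        filter_upwards [hgb, hhb] with ω h1 h2
        rw [Pi.mul_apply, Real.norm_eq_abs,
          abs_of_nonneg (mul_nonneg (hgnonneg ω) (Real.exp_pos _).le)]
        have := Real.exp_pos (θ * (n * L))
        nlinarith [hgnonneg ω, (Real.exp_pos (θ * X (n+1) ω)).le]
      -- conditional expectation bound on h
      have hcondh : (μ[h | ℱ n]) ≤ᵐ[μ]
          fun ω => Real.exp ((μ[X (n + 1) | ℱ n]) ω / L) := by
        have hpt : h ≤ᵐ[μ] fun ω => 1 + X (n + 1) ω / L := by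
          filter_upwards [hbound (n + 1)] with ω hω
          exact chernoff_aux_exp_le hL hω.1 hω.2
        have hint2 : Integrable (fun ω => 1 + X (n + 1) ω / L) μ :=
          (integrable_const (1:ℝ)).add ((hXint (n + 1)).div_const L)
        have h1 : μ[h | ℱ n] ≤ᵐ[μ] μ[(fun ω => 1 + X (n + 1) ω / L) | ℱ n] :=
          condExp_mono hhint hint2 hpt
        have h2 : μ[(fun ω => 1 + X (n + 1) ω / L) | ℱ n]
            =ᵐ[μ] fun ω => 1 + (μ[X (n + 1) | ℱ n]) ω / L := by
          have ha : μ[(fun ω => 1 + X (n + 1) ω / L) | ℱ n]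
              =ᵐ[μ] μ[(fun _ => (1:ℝ)) | ℱ n] + μ[(fun ω => X (n + 1) ω / L) | ℱ n] :=
            condExp_add (integrable_const 1) ((hXint (n + 1)).div_const L) _
          have hb' : μ[(fun _ => (1:ℝ)) | ℱ n] = fun _ => (1:ℝ) :=
            condExp_const (μ := μ) (ℱ.le n) 1
          have hc' : μ[(fun ω => X (n + 1) ω / L) | ℱ n]
              =ᵐ[μ] fun ω => (μ[X (n + 1) | ℱ n]) ω / L := by
            have hfun : (fun ω => X (n + 1) ω / L) = L⁻¹ • X (n + 1) := by
              funext ω; simp [div_eq_inv_mul]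
            rw [hfun]
            have := condExp_smul (μ := μ) (m := ℱ n) (L⁻¹) (X (n + 1))
            filter_upwards [this] with ω hω
            simp only [Pi.smul_apply, smul_eq_mul] at hω
            rw [hω, div_eq_inv_mul]
          rw [hb'] at ha
          filter_upwards [ha, hc'] with ω h1 h3
          rw [h1, Pi.add_apply, h3]
        filter_upwards [h1, h2] with ω h1 h2
        rw [h2] at h1
        calc (μ[h | ℱ n]) ω ≤ 1 + (μ[X (n + 1) | ℱ n]) ω / L := h1
          _ ≤ Real.exp ((μ[X (n + 1) | ℱ n]) ω / L) := by
              linarith [Real.add_one_le_exp ((μ[X (n + 1) | ℱ n]) ω / L)]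
      -- pull-out and tower
      have hpull : μ[g * h | ℱ n] =ᵐ[μ] g * μ[h | ℱ n] :=
        condExp_mul_of_stronglyMeasurable_left hgm hghint hhint
      have hgcint : Integrable (g * μ[h | ℱ n]) μ := by
        refine (integrable_const (Real.exp (θ * (n * L)) * 2)).mono'
          (hgm0.mul (stronglyMeasurable_condExp.mono (ℱ.le n))).aestronglyMeasurable ?_
        have hch2 : (μ[h | ℱ n]) ≤ᵐ[μ] fun _ => (2:ℝ) := by
          have h1 := condExp_mono (μ := μ) (m := ℱ n) hhint (integrable_const 2) hhb
          rw [condExp_const (μ := μ) (ℱ.le n) (2:ℝ)] at h1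
          exact h1
        have hch0 : 0 ≤ᵐ[μ] (μ[h | ℱ n]) :=
          condExp_nonneg (Filter.Eventually.of_forall fun ω => (Real.exp_pos _).le)
        filter_upwards [hgb, hch2, hch0] with ω h1 h2 h3
        rw [Pi.mul_apply, Real.norm_eq_abs, abs_of_nonneg (mul_nonneg (hgnonneg ω) h3)]
        have := Real.exp_pos (θ * (n * L))
        nlinarith [hgnonneg ω]
      calc ∫ ω, f (n + 1) ω ∂μ = ∫ ω, (g * h) ω ∂μ := by
            apply integral_congr_ae
            exact Filter.Eventually.of_forall fun ω => hfsplit ω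
        _ = ∫ ω, (μ[g * h | ℱ n]) ω ∂μ :=
            (integral_condExp (μ := μ) (f := g * h) (ℱ.le n)).symm
        _ = ∫ ω, (g * μ[h | ℱ n]) ω ∂μ := integral_congr_ae hpull
        _ ≤ ∫ ω, f n ω ∂μ := by
            apply integral_mono_ae hgcint (hfint n)
            filter_upwards [hcondh] with ω hω
            rw [Pi.mul_apply]
            calc g ω * (μ[h | ℱ n]) ω
                ≤ g ω * Real.exp ((μ[X (n + 1) | ℱ n]) ω / L) :=
                  mul_le_mul_of_nonneg_left hω (hgnonneg ω)
              _ = f n ω := by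
                  rw [hgdef]
                  rw [mul_assoc, ← Real.exp_add]
                  simp [neg_div]
        _ ≤ 1 := ih
  -- v is nonnegative
  haveI : (MeasureTheory.ae μ).NeBot := ae_neBot.2 (IsProbabilityMeasure.ne_zero μ)
  obtain ⟨ω0, hω1, hω2⟩ := (hV.and (hWb T)).exists
  have hv0 : 0 ≤ v := le_trans hω2 hω1
  -- the event is contained in the Markov event
  have hAB : {ω | 2 * v + 2 * L * u ≤ S T ω} ≤ᵐ[μ] {ω | Real.exp u ≤ f T ω} := by
    filter_upwards [hV] with ω hVω hmem
    have hmem' : 2 * v + 2 * L * u ≤ S T ω := hmem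
    have harith : u ≤ θ * S T ω - W T ω / L := by
      have h1 : θ * (2 * v + 2 * L * u) ≤ θ * S T ω :=
        mul_le_mul_of_nonneg_left hmem' hθpos.le
      have h2 : W T ω / L ≤ v / L := by gcongr
      have h3 : θ * (2 * v + 2 * L * u)
          = 2 * Real.log 2 * (v / L) + 2 * Real.log 2 * u := by
        rw [hθdef]; field_simp
      have h4 : 0 ≤ v / L := div_nonneg hv0 hL.le
      nlinarith [h4, hu, hlog2]
    show Real.exp u ≤ f T ω
    exact Real.exp_le_exp.2 harith
  have hμAB := measure_mono_ae hAB
  have hmarkov := mul_meas_ge_le_integral_of_nonneg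
    (Filter.Eventually.of_forall fun ω => (hfpos T ω).le) (hfint T) (Real.exp u)
  have h2 : (μ {ω | Real.exp u ≤ f T ω}).toReal ≤ Real.exp (-u) := by
    have hinv : Real.exp (-u) * Real.exp u = 1 := by
      rw [← Real.exp_add]; simp
    have h5 := hmarkov.trans (key T)
    rw [measureReal_def] at h5
    nlinarith [Real.exp_pos u, ENNReal.toReal_nonneg
      (a := μ {ω | Real.exp u ≤ f T ω})]
  calc μ {ω | 2 * v + 2 * L * u ≤ S T ω} ≤ μ {ω | Real.exp u ≤ f T ω} := hμAB
    _ = ENNReal.ofReal (μ {ω | Real.exp u ≤ f T ω}).toReal :=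
        (ENNReal.ofReal_toReal (measure_ne_top μ _)).symm
    _ ≤ ENNReal.ofReal (Real.exp (-u)) := ENNReal.ofReal_le_ofReal h2
end
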